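/- For every integer k ≥ 1, the value of the interpolation polynomial r_{(k)} at x = 1 is given by r_{(k)}(1) = (−1)^k · 2^{−(2k−1)} · ((2k−3)!!/(k−1)!) · Σ_{i=0}^{k} (2i−1)·C(2k+1, 2i+1). -/

import Mathlib

/-!
Put `F(x) = x·p(x)`, a polynomial of degree `≤ 2k`. Along the arithmetic progression
`1, 1/2, 0, -1/2, …, 1/2 - k` of step `-1/2` its values are all known except the first one:
`F(1/2 - i) = (1/2 - i)·c` with `c` the common value of `p` there, and `F` vanishes at the
integers `0, -1, …, -(k-1)` (at `0` thanks to the factor `x`). The `(2k+1)`-st finite difference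
of `F` along the progression vanishes, which expresses `F(1) = p(1)` as an alternating binomial
sum of these values; only the half-integer points survive.
-/

open Polynomial

/-- The defining interpolation conditions of the polynomial `r_{(k)}` (`k ≥ 1`):
degree `≤ 2k−1`, zeros at `−1, …, −(k−1)`, and value
`(−2)^{−(k−1)}·(1/2)_{k−1}/(k−1)!` at the points `1/2 − i` for `i = 0, 1, …, k`. -/
def rCond (k : ℕ) (p : Polynomial ℚ) : Prop :=
  p.natDegree ≤ 2 * k - 1 ∧
  (∀ i : ℕ, 1 ≤ i → i ≤ k - 1 → p.eval (-(i : ℚ)) = 0) ∧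
  (∀ i : ℕ, i ≤ k →
    p.eval (1 / 2 - (i : ℚ))
      = (-2 : ℚ) ^ (-((k : ℤ) - 1)) * (ascPochhammer ℚ (k - 1)).eval (1 / 2)
          / ((k - 1).factorial : ℚ))

open Finset Nat

theorem Finset.sum_range_two_mul {M : Type*} [AddCommMonoid M] (f : ℕ → M) (n : ℕ) :
    ∑ j ∈ range (2 * n), f j = ∑ i ∈ range n, (f (2 * i) + f (2 * i + 1)) := by
  induction n with
  | zero => simp
  | succ n ih =>
    rw [mul_add, mul_one, sum_range_succ, sum_range_succ, sum_range_succ, ih, add_assoc]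

theorem ascPochhammer_eval_half {K : Type*} [Field K] [CharZero K] (n : ℕ) :
    (ascPochhammer K n).eval (1 / 2) = ((2 * n - 1)‼ : K) / 2 ^ n := by
  induction n with
  | zero => simp
  | succ n ih =>
    have hdf : (2 * (n + 1) - 1)‼ = (2 * n + 1) * (2 * n - 1)‼ := by
      cases n with
      | zero => rfl
      | succ m =>
        rw [show 2 * (m + 1 + 1) - 1 = 2 * m + 1 + 2 by omega, doubleFactorial_add_two]
        rfl
    rw [ascPochhammer_succ_eval, ih, hdf]
    push_cast
    field_simp
    ring

theorem Polynomial.sum_alternating_choose_mul_eval_eq_zero {R : Type*} [CommRing R] {P : R[X]}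
    {n : ℕ} (hP : P.natDegree < n) (a h : R) :
    ∑ j ∈ range (n + 1), (-1) ^ (n - j) * (n.choose j : R) * P.eval (a + j * h) = 0 := by
  have hlin : (C a + C h * X).natDegree ≤ 1 := by
    rw [natDegree_C_add]
    exact (natDegree_C_mul_le h X).trans natDegree_X_le
  have hQ : (P.comp (C a + C h * X)).natDegree < n :=
    (natDegree_comp_le.trans (mul_le_of_le_one_right (Nat.zero_le _) hlin)).trans_lt hP
  have := congr_fun (fwdDiff_iter_eq_zero_of_degree_lt hQ) 0
  rw [fwdDiff_iter_eq_sum_shift] at this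
  simpa [zsmul_eq_mul, mul_comm h] using this

theorem eval_one_eq_of_interpolation {K : Type*} [Field K] [NeZero (2 : K)] {k : ℕ} {p : K[X]}
    {c : K} (hdeg : p.natDegree < 2 * k)
    (hzero : ∀ i : ℕ, 1 ≤ i → i ≤ k - 1 → p.eval (-(i : K)) = 0)
    (hval : ∀ i : ℕ, i ≤ k → p.eval (1 / 2 - (i : K)) = c) :
    p.eval 1 = c * ∑ i ∈ range (k + 1), (1 / 2 - (i : K)) * ((2 * k + 1).choose (2 * i + 1) : K) := by
  have hXp : (X * p).natDegree < 2 * k + 1 := by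
    have := natDegree_mul_le (p := X) (q := p)
    rw [natDegree_X] at this
    omega
  have key := sum_alternating_choose_mul_eval_eq_zero hXp 1 (-1 / 2)
  rw [show 2 * k + 1 + 1 = 2 * (k + 1) by ring, sum_range_two_mul, sum_add_distrib] at key
  have heven : ∑ i ∈ range (k + 1), (-1) ^ (2 * k + 1 - 2 * i) * ((2 * k + 1).choose (2 * i) : K)
      * (X * p).eval (1 + ((2 * i : ℕ) : K) * (-1 / 2)) = -p.eval 1 := by
    rw [sum_eq_single_of_mem 0 (by simp)]
    · simp [pow_succ, pow_mul]
    intro i hi hi0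
    obtain ⟨m, rfl⟩ := Nat.exists_eq_add_of_le' (Nat.pos_of_ne_zero hi0)
    rw [show 1 + ((2 * (m + 1) : ℕ) : K) * (-1 / 2) = -m by push_cast; field_simp; ring, eval_mul,
      eval_X]
    rcases m with _ | m
    · simp
    · rw [hzero (m + 1) (by omega) (by rw [mem_range] at hi; omega), mul_zero, mul_zero]
  have hodd : ∀ i ∈ range (k + 1),
      (-1) ^ (2 * k + 1 - (2 * i + 1)) * ((2 * k + 1).choose (2 * i + 1) : K)
        * (X * p).eval (1 + ((2 * i + 1 : ℕ) : K) * (-1 / 2))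
      = c * ((1 / 2 - (i : K)) * ((2 * k + 1).choose (2 * i + 1) : K)) := by
    intro i hi
    rw [eval_mul, eval_X, show 1 + ((2 * i + 1 : ℕ) : K) * (-1 / 2) = 1 / 2 - i by
        push_cast; field_simp; ring,
      hval i (by simpa [Nat.lt_succ_iff] using hi),
      show 2 * k + 1 - (2 * i + 1) = 2 * (k - i) by omega]
    simp only [even_two_mul, Even.neg_one_pow, one_mul]
    ring
  rw [heven, sum_congr rfl hodd, ← mul_sum] at key
  linear_combination -key

/-- For every integer `k ≥ 1`, the value of the interpolation polynomial `r_{(k)}` at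
`x = 1` is `r_{(k)}(1) = (−1)^k·2^{−(2k−1)}·((2k−3)!!/(k−1)!)·Σ_{i=0}^{k}(2i−1)·C(2k+1,2i+1)`. -/
theorem r_k_value_at_one (k : ℕ) (hk : 1 ≤ k) (p : Polynomial ℚ) (hp : rCond k p) :
    p.eval 1
      = (-1 : ℚ) ^ k * ((2 : ℚ) ^ (2 * k - 1))⁻¹
          * ((Nat.doubleFactorial (2 * k - 3) : ℚ) / ((k - 1).factorial : ℚ))
          * ∑ i ∈ Finset.range (k + 1),
              (2 * (i : ℚ) - 1) * (Nat.choose (2 * k + 1) (2 * i + 1) : ℚ) := by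
  obtain ⟨hdeg, hzero, hval⟩ := hp
  have hc : (-2 : ℚ) ^ (-((k : ℤ) - 1)) * (ascPochhammer ℚ (k - 1)).eval (1 / 2)
      / ((k - 1)! : ℚ) = -2 * ((-1 : ℚ) ^ k * ((2 : ℚ) ^ (2 * k - 1))⁻¹
        * (((2 * k - 3)‼ : ℚ) / ((k - 1)! : ℚ))) := by
    obtain ⟨m, rfl⟩ := Nat.exists_eq_add_of_le' hk
    rw [ascPochhammer_eval_half, show 2 * (m + 1) - 3 = 2 * (m + 1 - 1) - 1 by omega,
      show 2 * (m + 1) - 1 = 2 * m + 1 by omega,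
      show -(((m + 1 : ℕ) : ℤ) - 1) = -(m : ℤ) by push_cast; ring,
      zpow_neg, zpow_natCast, neg_pow, Nat.add_sub_cancel]
    field_simp
    have hsq : ((-1 : ℚ) ^ m) * (-1) ^ m = 1 := by rw [← mul_pow]; norm_num
    linear_combination (-(2 : ℚ) ^ (2 * m + 1)) * hsq
  rw [eval_one_eq_of_interpolation (by omega) hzero hval, hc, mul_sum, mul_sum]
  refine sum_congr rfl fun i _ => ?_
  ring
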